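/- Let N, M, L ∈ ℕ with L ≥ 1 and M ≥ 1, and for each j ∈ {1,…,M} and v ∈ {1,…,N} let P_v^j ⊆ {1,…,N}. Define g_j(x) = (1/N) ∑_{v=1}^N (1 − ∏_{i∈P_v^j}(1−x_i)), the influence objective f(x) = (1/M) ∑_{j=1}^M log(1 + g_j(x)), and its polynomial estimator f̂_L(x) = (1/M) ∑_{j=1}^M ĥ_L(g_j(x)), where ĥ_L(s) = log(3/2) + ∑_{ℓ=1}^L ((−1)^{ℓ−1}/ℓ)(2/3)^ℓ (s−1/2)^ℓ is the degree-L Taylor polynomial of log(1+s) around 1/2. Let G and Ĝ_L be the multilinear extensions of f and f̂_L restricted to {0,1}^N, with gradients ∇G(y)_i = G([y]_{+i}) − G([y]_{−i}) and similarly for Ĝ_L. Then for every y ∈ [0,1]^N, ‖∇G(y) − ∇Ĝ_L(y)‖₂ ≤ √N / ((L+1) · 2^L). -/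

import Mathlib

/-- The indicator vector of a subset `S` of `{1,…,N}`, viewed as a point of `{0,1}^N ⊆ ℝ^N`. -/
noncomputable def ind {N : ℕ} (S : Finset (Fin N)) : Fin N → ℝ :=
  fun i => if i ∈ S then 1 else 0

/-- `∏_{i∈S} y_i ∏_{i∉S} (1 - y_i)`. -/
noncomputable def wt {N : ℕ} (y : Fin N → ℝ) (S : Finset (Fin N)) : ℝ :=
  (∏ i ∈ S, y i) * ∏ i ∈ Sᶜ, (1 - y i)

/-- The multilinear extension `G(y) = ∑_{x∈{0,1}^N} f(x) ∏_{i:x_i=1} y_i ∏_{i:x_i=0}(1-y_i)`. -/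
noncomputable def mlext {N : ℕ} (f : (Fin N → ℝ) → ℝ) (y : Fin N → ℝ) : ℝ :=
  ∑ S : Finset (Fin N), f (ind S) * wt y S

/-- `∇G(y)_i = G([y]_{+i}) - G([y]_{-i})`. -/
noncomputable def gradML {N : ℕ} (f : (Fin N → ℝ) → ℝ) (y : Fin N → ℝ) (i : Fin N) : ℝ :=
  mlext f (Function.update y i 1) - mlext f (Function.update y i 0)

/-- Euclidean norm on `ℝ^N`. -/
noncomputable def norm2 {N : ℕ} (v : Fin N → ℝ) : ℝ :=
  Real.sqrt (∑ i, v i ^ 2)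

/-! On the cube, `g_j` takes values in `[0, 1]`, and there `ĥ_L` is the Taylor polynomial of
`log (1 + s)` about `1/2`: with `x = (1 - 2s)/3`, `|x| ≤ 1/3`, the error is the tail of the series
of `log (1 - x)`, at most `|x|^(L+1) / ((L+1)(1-|x|)) ≤ 1/(2(L+1)3^L)`. Averaging over `j` keeps
this bound at every vertex. The multilinear extension is a convex combination of vertex values,
so each gradient coordinate `G([y]₊ᵢ) - G([y]₋ᵢ)` is off by at most twice the bound, and the
Euclidean norm picks up a factor `√N`. -/

open Finset Real

/-- `Real.abs_log_sub_add_sum_range_le` without its loss of the factor `1/(n+1)`, which the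
bound with `2^L` cannot afford for small `L`. -/
lemma abs_sum_range_add_log_one_sub_le {x : ℝ} (h : |x| < 1) (n : ℕ) :
    |(∑ i ∈ range n, x ^ (i + 1) / (i + 1)) + log (1 - x)| ≤
      |x| ^ (n + 1) / ((n + 1) * (1 - |x|)) := by
  have hlog := hasSum_pow_div_log_of_abs_lt_one h
  have htail : (∑ i ∈ range n, x ^ (i + 1) / (i + 1)) + log (1 - x) =
      -∑' k : ℕ, x ^ (k + n + 1) / ((k + n : ℕ) + 1) := by
    rw [← neg_neg (log (1 - x)), ← hlog.tsum_eq, ← hlog.summable.sum_add_tsum_nat_add n,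
      neg_add, add_neg_cancel_left]
  have hgeom : HasSum (fun k : ℕ => |x| ^ (n + 1) / (n + 1) * |x| ^ k)
      (|x| ^ (n + 1) / ((n + 1) * (1 - |x|))) := by
    have := (hasSum_geometric_of_lt_one (abs_nonneg x) h).mul_left (|x| ^ (n + 1) / (n + 1))
    rwa [← div_eq_mul_inv, div_div] at this
  rw [htail, abs_neg, ← norm_eq_abs]
  refine tsum_of_norm_bounded hgeom fun k => ?_
  have hden : (n : ℝ) + 1 ≤ ((k + n : ℕ) : ℝ) + 1 := by
    push_cast
    linarith [k.cast_nonneg (α := ℝ)]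
  calc ‖x ^ (k + n + 1) / (((k + n : ℕ) : ℝ) + 1)‖
      = |x| ^ (n + 1) * |x| ^ k / (((k + n : ℕ) : ℝ) + 1) := by
        rw [norm_div, norm_pow, norm_eq_abs, norm_of_nonneg (by positivity)]
        ring
    _ ≤ |x| ^ (n + 1) * |x| ^ k / (n + 1) := by gcongr
    _ = |x| ^ (n + 1) / (n + 1) * |x| ^ k := by ring

noncomputable def logTaylorAtHalf (L : ℕ) (s : ℝ) : ℝ :=
  log (3 / 2) + ∑ ℓ ∈ Icc 1 L, ((-1 : ℝ) ^ (ℓ - 1) / (ℓ : ℝ)) * (2 / 3) ^ ℓ * (s - 1 / 2) ^ ℓ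

lemma abs_log_one_add_sub_logTaylorAtHalf_le (L : ℕ) {s : ℝ} (hs : s ∈ Set.Icc (0 : ℝ) 1) :
    |log (1 + s) - logTaylorAtHalf L s| ≤ 1 / (2 * ((L + 1) * 3 ^ L)) := by
  obtain ⟨hs0, hs1⟩ := hs
  set x : ℝ := -(2 / 3 * (s - 1 / 2)) with hx
  have hx3 : |x| ≤ 1 / 3 := abs_le.2 ⟨by linarith, by linarith⟩
  have hlog : log (1 - x) = log (1 + s) - log (3 / 2) := by
    rw [← log_div (by linarith) (by norm_num)]
    congr 1
    ring
  have hsum : ∑ i ∈ range L, x ^ (i + 1) / (i + 1) =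
      -∑ ℓ ∈ Icc 1 L, ((-1 : ℝ) ^ (ℓ - 1) / (ℓ : ℝ)) * (2 / 3) ^ ℓ * (s - 1 / 2) ^ ℓ := by
    rw [← Ico_add_one_right_eq_Icc, sum_Ico_eq_sum_range, Nat.add_sub_cancel, ← sum_neg_distrib]
    refine sum_congr rfl fun i _ => ?_
    rw [hx, neg_pow, mul_pow, add_comm 1 i, Nat.add_sub_cancel, pow_succ (-1 : ℝ)]
    push_cast
    ring
  have htaylor : log (1 + s) - logTaylorAtHalf L s =
      (∑ i ∈ range L, x ^ (i + 1) / (i + 1)) + log (1 - x) := by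
    rw [hsum, hlog, logTaylorAtHalf]
    ring
  rw [htaylor]
  calc _ ≤ |x| ^ (L + 1) / ((L + 1) * (1 - |x|)) :=
        abs_sum_range_add_log_one_sub_le (by linarith) L
    _ ≤ (1 / 3) ^ (L + 1) / ((L + 1) * (1 - 1 / 3)) := by
        gcongr
    _ = 1 / (2 * ((L + 1) * 3 ^ L)) := by
        rw [one_div_pow]
        field_simp
        ring

lemma mean_le {n : ℕ} {a : Fin n → ℝ} {c : ℝ} (hc : 0 ≤ c) (h : ∀ j, a j ≤ c) :
    1 / (n : ℝ) * ∑ j, a j ≤ c :=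
  calc 1 / (n : ℝ) * ∑ j, a j ≤ 1 / n * (n * c) := by
        gcongr
        simpa using sum_le_sum fun j (_ : j ∈ univ) => h j
    _ = n / n * c := by ring
    _ ≤ c := mul_le_of_le_one_left hc (div_self_le_one _)

lemma abs_mean_le {n : ℕ} {a : Fin n → ℝ} {c : ℝ} (hc : 0 ≤ c) (h : ∀ j, |a j| ≤ c) :
    |1 / (n : ℝ) * ∑ j, a j| ≤ c :=
  calc |1 / (n : ℝ) * ∑ j, a j| ≤ 1 / n * ∑ j, |a j| := by
        rw [abs_mul, abs_of_nonneg (by positivity)]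
        gcongr
        exact abs_sum_le_sum_abs _ _
    _ ≤ c := mean_le hc h

lemma mean_mem_Icc {n : ℕ} {a : Fin n → ℝ} (h : ∀ j, a j ∈ Set.Icc (0 : ℝ) 1) :
    1 / (n : ℝ) * ∑ j, a j ∈ Set.Icc (0 : ℝ) 1 :=
  ⟨mul_nonneg (by positivity) (sum_nonneg fun j _ => (h j).1), mean_le zero_le_one fun j => (h j).2⟩

lemma one_sub_prod_one_sub_mem_Icc {ι : Type*} (s : Finset ι) {x : ι → ℝ}
    (hx : ∀ i, x i ∈ Set.Icc (0 : ℝ) 1) : 1 - ∏ i ∈ s, (1 - x i) ∈ Set.Icc (0 : ℝ) 1 := by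
  have h0 : ∀ i ∈ s, 0 ≤ 1 - x i := fun i _ => sub_nonneg.2 (hx i).2
  have h1 : ∀ i ∈ s, 1 - x i ≤ 1 := fun i _ => sub_le_self _ (hx i).1
  constructor
  · linarith [prod_le_one h0 h1]
  · linarith [prod_nonneg h0]

lemma ind_mem_Icc {N : ℕ} (S : Finset (Fin N)) (i : Fin N) : ind S i ∈ Set.Icc (0 : ℝ) 1 := by
  unfold ind
  split_ifs <;> simp

section MultilinearExtension

variable {N : ℕ} {y : Fin N → ℝ}

lemma wt_nonneg (hy : ∀ i, y i ∈ Set.Icc (0 : ℝ) 1) (S : Finset (Fin N)) : 0 ≤ wt y S :=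
  mul_nonneg (prod_nonneg fun i _ => (hy i).1) (prod_nonneg fun i _ => sub_nonneg.2 (hy i).2)

lemma sum_wt (y : Fin N → ℝ) : ∑ S : Finset (Fin N), wt y S = 1 := by
  have h := prod_add (s := univ) y fun i => 1 - y i
  simp only [add_sub_cancel, prod_const_one, powerset_univ] at h
  rw [h]
  refine sum_congr rfl fun S _ => ?_
  rw [wt, compl_eq_univ_sdiff]

lemma abs_mlext_sub_le {f g : (Fin N → ℝ) → ℝ} (hy : ∀ i, y i ∈ Set.Icc (0 : ℝ) 1) {δ : ℝ}
    (h : ∀ S : Finset (Fin N), |f (ind S) - g (ind S)| ≤ δ) :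
    |mlext f y - mlext g y| ≤ δ :=
  calc |mlext f y - mlext g y| = |∑ S, (f (ind S) - g (ind S)) * wt y S| := by
        simp only [mlext, sub_mul, sum_sub_distrib]
    _ ≤ ∑ S, |f (ind S) - g (ind S)| * wt y S := by
        refine (abs_sum_le_sum_abs _ _).trans_eq (sum_congr rfl fun S _ => ?_)
        rw [abs_mul, abs_of_nonneg (wt_nonneg hy S)]
    _ ≤ ∑ S, δ * wt y S := by
        gcongr with S
        exacts [wt_nonneg hy S, h S]
    _ = δ := by rw [← mul_sum, sum_wt, mul_one]

lemma abs_gradML_sub_le {f g : (Fin N → ℝ) → ℝ} (hy : ∀ i, y i ∈ Set.Icc (0 : ℝ) 1) {δ : ℝ}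
    (h : ∀ S : Finset (Fin N), |f (ind S) - g (ind S)| ≤ δ) (i : Fin N) :
    |gradML f y i - gradML g y i| ≤ 2 * δ := by
  have hupdate : ∀ a ∈ Set.Icc (0 : ℝ) 1, ∀ k, Function.update y i a k ∈ Set.Icc (0 : ℝ) 1 :=
    fun a ha => (Function.forall_update_iff y fun _ b => b ∈ Set.Icc (0 : ℝ) 1).2
      ⟨ha, fun k _ => hy k⟩
  have h1 := abs_mlext_sub_le (hupdate 1 (by simp)) h
  have h0 := abs_mlext_sub_le (hupdate 0 (by simp)) h
  unfold gradML
  calc _ = |(mlext f (Function.update y i 1) - mlext g (Function.update y i 1)) -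
        (mlext f (Function.update y i 0) - mlext g (Function.update y i 0))| := by
        congr 1
        ring
    _ ≤ 2 * δ := by linarith [abs_sub _ _ |>.trans (add_le_add h1 h0)]

end MultilinearExtension

lemma norm2_le_sqrt_mul {N : ℕ} {v : Fin N → ℝ} {c : ℝ} (hc : 0 ≤ c) (h : ∀ i, |v i| ≤ c) :
    norm2 v ≤ √N * c :=
  calc norm2 v ≤ √(N * c ^ 2) := by
        refine sqrt_le_sqrt ?_
        simpa using sum_le_sum fun i (_ : i ∈ univ) =>
          sq_le_sq' (abs_le.1 (h i)).1 (abs_le.1 (h i)).2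
    _ = √N * c := by rw [sqrt_mul N.cast_nonneg, sqrt_sq hc]

theorem influence_bias_bound_general {N M : ℕ} (L : ℕ)
    (P : Fin M → Fin N → Finset (Fin N))
    (f fhat : (Fin N → ℝ) → ℝ)
    (hf : ∀ x : Fin N → ℝ, f x = (1 / (M : ℝ)) * ∑ j : Fin M,
      Real.log (1 + (1 / (N : ℝ)) * ∑ v : Fin N, (1 - ∏ i ∈ P j v, (1 - x i))))
    (hfhat : ∀ x : Fin N → ℝ, fhat x = (1 / (M : ℝ)) * ∑ j : Fin M, (Real.log (3 / 2) +
      ∑ ℓ ∈ Finset.Icc 1 L, ((-1 : ℝ) ^ (ℓ - 1) / (ℓ : ℝ)) * (2 / 3) ^ ℓ *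
        (((1 / (N : ℝ)) * ∑ v : Fin N, (1 - ∏ i ∈ P j v, (1 - x i))) - 1 / 2) ^ ℓ))
    (y : Fin N → ℝ) (hy : ∀ i, y i ∈ Set.Icc (0 : ℝ) 1) :
    norm2 (fun i => gradML f y i - gradML fhat y i) ≤
      Real.sqrt (N : ℝ) / (((L : ℝ) + 1) * 2 ^ L) := by
  set δ : ℝ := 1 / (2 * ((L + 1) * 3 ^ L)) with hδ
  have hvertex : ∀ S : Finset (Fin N), |f (ind S) - fhat (ind S)| ≤ δ := by
    intro S
    rw [hf, hfhat, ← mul_sub, ← sum_sub_distrib]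
    exact abs_mean_le (by positivity) fun j => abs_log_one_add_sub_logTaylorAtHalf_le L
      (mean_mem_Icc fun v => one_sub_prod_one_sub_mem_Icc _ (ind_mem_Icc S))
  calc _ ≤ √N * (2 * δ) :=
        norm2_le_sqrt_mul (by positivity) (abs_gradML_sub_le hy hvertex)
    _ = √N / ((L + 1) * 3 ^ L) := by rw [hδ]; field_simp
    _ ≤ √N / ((L + 1) * 2 ^ L) := by gcongr; norm_num

/-- for the influence-maximization objective
`f(x) = (1/M) ∑_{j=1}^M log(1 + g_j(x))` with
`g_j(x) = (1/N) ∑_{v=1}^N (1 - ∏_{i∈P_v^j}(1 - x_i))`, and its polynomial estimator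
`f̂_L(x) = (1/M) ∑_{j=1}^M ĥ_L(g_j(x))` with `ĥ_L` the degree-`L` Taylor polynomial of
`log(1+s)` at `1/2`, the gradients of the multilinear extensions satisfy
`‖∇G(y) - ∇Ĝ_L(y)‖₂ ≤ √N / ((L+1)·2^L)` for all `y ∈ [0,1]^N`. -/
theorem influence_bias_bound {N M : ℕ} (L : ℕ) (hL : 1 ≤ L) (hM : 1 ≤ M)
    (P : Fin M → Fin N → Finset (Fin N))
    (f fhat : (Fin N → ℝ) → ℝ)
    (hf : ∀ x : Fin N → ℝ, f x = (1 / (M : ℝ)) * ∑ j : Fin M,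
      Real.log (1 + (1 / (N : ℝ)) * ∑ v : Fin N, (1 - ∏ i ∈ P j v, (1 - x i))))
    (hfhat : ∀ x : Fin N → ℝ, fhat x = (1 / (M : ℝ)) * ∑ j : Fin M, (Real.log (3 / 2) +
      ∑ ℓ ∈ Finset.Icc 1 L, ((-1 : ℝ) ^ (ℓ - 1) / (ℓ : ℝ)) * (2 / 3) ^ ℓ *
        (((1 / (N : ℝ)) * ∑ v : Fin N, (1 - ∏ i ∈ P j v, (1 - x i))) - 1 / 2) ^ ℓ))
    (y : Fin N → ℝ) (hy : ∀ i, y i ∈ Set.Icc (0 : ℝ) 1) :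
    norm2 (fun i => gradML f y i - gradML fhat y i) ≤
      Real.sqrt (N : ℝ) / (((L : ℝ) + 1) * 2 ^ L) :=
  influence_bias_bound_general L P f fhat hf hfhat y hy
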